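/- arXiv:1707.04744 — 2 statements merged into one kernel-verified Lean document; each statement's English description precedes it below -/
import Mathlib

section
/- Consider the coupled system on (0,L): α¹h₁ v¹_{xx} - (G₂/h₂)(-v¹+v³) = -τ²ρ₁h₁ v¹, α³₁h₃ v³_{xx} - γβh₃ p_{xx} + (G₂/h₂)(-v¹+v³) = -τ²ρ₃h₃ v³, βh₃ p_{xx} - γβh₃ v³_{xx} = -τ²μh₃ p, together with (v³ - v¹)_x ≡ 0 on (0,L), subject to v¹(0)=v³(0)=p(0)=0, v¹_x(L)=v³_x(L)=p_x(L)=0, p(L)=0, where all physical constants α¹, α³₁, h₁, h₂, h₃, G₂, ρ₁, ρ₃, β, μ, γ are positive and τ ∈ ℝ. Then the only smooth solution is v¹ = v³ = p ≡ 0. -/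
open scoped ContDiff

lemma constOn {f : ℝ → ℝ} {B : ℝ} (hf : Differentiable ℝ f)
    (h : ∀ y ∈ Set.Ioo (0:ℝ) B, deriv f y = 0) :
    ∀ x ∈ Set.Icc (0:ℝ) B, f x = f 0 := by
  intro x hx
  rcases eq_or_lt_of_le hx.1 with h0 | h0
  · rw [← h0]
  · obtain ⟨c, hc, hslope⟩ := exists_hasDerivAt_eq_slope f (deriv f) h0
      hf.continuous.continuousOn (fun y _ => (hf y).hasDerivAt)
    have hc0 : deriv f c = 0 := h c ⟨hc.1, lt_of_lt_of_le hc.2 hx.2⟩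
    rw [hc0] at hslope
    have hxne : x - 0 ≠ 0 := by intro h'; simp at h'; linarith
    have := (div_eq_zero_iff.mp hslope.symm).resolve_right hxne
    linarith

lemma deriv_congr_Ioo {f g : ℝ → ℝ} {B : ℝ}
    (h : ∀ y ∈ Set.Ioo (0:ℝ) B, f y = g y) {x : ℝ} (hx : x ∈ Set.Ioo (0:ℝ) B) :
    deriv f x = deriv g x := by
  have : f =ᶠ[nhds x] g := Filter.eventuallyEq_of_mem (isOpen_Ioo.mem_nhds hx) h
  exact this.deriv_eq

/-- The inertial-sliding eigenvalue problem of the fully dynamic Rao-Nakra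
piezoelectric sandwich beam: the coupled system
`α¹h₁ v¹'' - (G₂/h₂)(-v¹+v³) = -τ²ρ₁h₁ v¹`,
`α³₁h₃ v³'' - γβh₃ p'' + (G₂/h₂)(-v¹+v³) = -τ²ρ₃h₃ v³`,
`βh₃ p'' - γβh₃ v³'' = -τ²μh₃ p`, together with `(v³ - v¹)_x ≡ 0`,
subject to `v¹(0)=v³(0)=p(0)=0`, `v¹_x(L)=v³_x(L)=p_x(L)=0`, `p(L)=0`,
with all physical constants positive, has only the trivial smooth solution. -/
theorem stmt_7 (L α₁ α₃₁ h₁ h₂ h₃ G₂ ρ₁ ρ₃ β μ γ : ℝ) (τ : ℝ)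
    (hL : 0 < L) (hα₁ : 0 < α₁) (hα₃₁ : 0 < α₃₁) (hh₁ : 0 < h₁) (hh₂ : 0 < h₂)
    (hh₃ : 0 < h₃) (hG₂ : 0 < G₂) (hρ₁ : 0 < ρ₁) (hρ₃ : 0 < ρ₃) (hβ : 0 < β)
    (hμ : 0 < μ) (hγ : 0 < γ)
    (v₁ v₃ p : ℝ → ℝ)
    (hv₁ : ContDiff ℝ (⊤ : ℕ∞) v₁) (hv₃ : ContDiff ℝ (⊤ : ℕ∞) v₃) (hp : ContDiff ℝ (⊤ : ℕ∞) p)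
    (heq₁ : ∀ x ∈ Set.Icc (0 : ℝ) L,
      α₁ * h₁ * deriv (deriv v₁) x - G₂ / h₂ * (-v₁ x + v₃ x)
        = -τ ^ 2 * ρ₁ * h₁ * v₁ x)
    (heq₂ : ∀ x ∈ Set.Icc (0 : ℝ) L,
      α₃₁ * h₃ * deriv (deriv v₃) x - γ * β * h₃ * deriv (deriv p) x
          + G₂ / h₂ * (-v₁ x + v₃ x)
        = -τ ^ 2 * ρ₃ * h₃ * v₃ x)
    (heq₃ : ∀ x ∈ Set.Icc (0 : ℝ) L,
      β * h₃ * deriv (deriv p) x - γ * β * h₃ * deriv (deriv v₃) x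
        = -τ ^ 2 * μ * h₃ * p x)
    (hshear : ∀ x ∈ Set.Icc (0 : ℝ) L, deriv (fun y => v₃ y - v₁ y) x = 0)
    (hbc0 : v₁ 0 = 0 ∧ v₃ 0 = 0 ∧ p 0 = 0)
    (hbcL : deriv v₁ L = 0 ∧ deriv v₃ L = 0 ∧ deriv p L = 0 ∧ p L = 0) :
    ∀ x ∈ Set.Icc (0 : ℝ) L, v₁ x = 0 ∧ v₃ x = 0 ∧ p x = 0 := by
  obtain ⟨hb1, hb3, hbp⟩ := hbc0
  obtain ⟨hd1, hd3, hdp, hpL⟩ := hbcL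
  have hv₁d : Differentiable ℝ v₁ := hv₁.differentiable (by simp)
  have hv₃d : Differentiable ℝ v₃ := hv₃.differentiable (by simp)
  have hpd : Differentiable ℝ p := hp.differentiable (by simp)
  have hv₁' : ContDiff ℝ ∞ (deriv v₁) := (contDiff_infty_iff_deriv.mp (hv₁.of_le (by simp))).2
  have hv₃' : ContDiff ℝ ∞ (deriv v₃) := (contDiff_infty_iff_deriv.mp (hv₃.of_le (by simp))).2
  have hp' : ContDiff ℝ ∞ (deriv p) := (contDiff_infty_iff_deriv.mp (hp.of_le (by simp))).2
  have hv₁'d : Differentiable ℝ (deriv v₁) := hv₁'.differentiable (by simp)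
  have hv₃'d : Differentiable ℝ (deriv v₃) := hv₃'.differentiable (by simp)
  have hp'd : Differentiable ℝ (deriv p) := hp'.differentiable (by simp)
  have hIoo : Set.Ioo (0:ℝ) L ⊆ Set.Icc (0:ℝ) L := Set.Ioo_subset_Icc_self
  have hclo : closure (Set.Ioo (0:ℝ) L) = Set.Icc (0:ℝ) L := closure_Ioo hL.ne
  -- v₃ = v₁ on Icc
  have h31 : ∀ x ∈ Set.Icc (0:ℝ) L, v₃ x = v₁ x := by
    intro x hx
    have := constOn (hv₃d.sub hv₁d) (fun y hy => hshear y (hIoo hy)) x hx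
    simp only [Pi.sub_apply, hb1, hb3, sub_zero] at this
    linarith
  -- deriv v₃ = deriv v₁ on Icc
  have hd31 : ∀ x ∈ Set.Icc (0:ℝ) L, deriv v₃ x = deriv v₁ x := by
    intro x hx
    have h := hshear x hx
    rw [deriv_fun_sub (hv₃d x) (hv₁d x)] at h
    linarith
  -- second derivatives agree on Ioo
  have hdd31 : ∀ x ∈ Set.Ioo (0:ℝ) L, deriv (deriv v₃) x = deriv (deriv v₁) x :=
    fun x hx => deriv_congr_Ioo (fun y hy => hd31 y (hIoo hy)) hx
  -- ODE for v₁ on Icc (multiplied form)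
  have ho1 : ∀ x ∈ Set.Icc (0:ℝ) L, α₁ * deriv (deriv v₁) x = -(τ^2) * ρ₁ * v₁ x := by
    intro x hx
    have h := heq₁ x hx
    have h31x := h31 x hx
    apply mul_left_cancel₀ hh₁.ne'
    linear_combination h + (G₂/h₂) * h31x
  rcases eq_or_ne τ 0 with hτ | hτ
  -- case τ = 0
  · have hD1 : ∀ x ∈ Set.Icc (0:ℝ) L, deriv (deriv v₁) x = 0 := by
      intro x hx
      have := ho1 x hx
      rw [hτ] at this
      have : α₁ * deriv (deriv v₁) x = 0 := by linarith [this]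
      exact (mul_eq_zero.mp this).resolve_left hα₁.ne'
    have hdv₁ : ∀ x ∈ Set.Icc (0:ℝ) L, deriv v₁ x = 0 := by
      intro x hx
      have hc := constOn hv₁'d (fun y hy => hD1 y (hIoo hy))
      have hL0 := hc L ⟨hL.le, le_refl L⟩
      rw [hd1] at hL0
      rw [hc x hx, ← hL0]
    have hv₁0 : ∀ x ∈ Set.Icc (0:ℝ) L, v₁ x = 0 := by
      intro x hx
      have := constOn hv₁d (fun y hy => hdv₁ y (hIoo hy)) x hx
      rw [hb1] at this; exact this
    -- p'' = 0 on Ioo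
    have hP0 : ∀ x ∈ Set.Ioo (0:ℝ) L, deriv (deriv p) x = 0 := by
      intro x hx
      have h := heq₃ x (hIoo hx)
      rw [hτ, hdd31 x hx, hD1 x (hIoo hx)] at h
      have : β * h₃ * deriv (deriv p) x = 0 := by ring_nf at h ⊢; linarith [h]
      rcases mul_eq_zero.mp this with h' | h'
      · exact absurd h' (mul_ne_zero hβ.ne' hh₃.ne')
      · exact h'
    have hdp0 : ∀ x ∈ Set.Icc (0:ℝ) L, deriv p x = 0 := by
      intro x hx
      have hc := constOn hp'd hP0
      have hL0 := hc L ⟨hL.le, le_refl L⟩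
      rw [hdp] at hL0
      rw [hc x hx, ← hL0]
    have hp0 : ∀ x ∈ Set.Icc (0:ℝ) L, p x = 0 := by
      intro x hx
      have := constOn hpd (fun y hy => hdp0 y (hIoo hy)) x hx
      rw [hbp] at this; exact this
    intro x hx
    exact ⟨hv₁0 x hx, by rw [h31 x hx]; exact hv₁0 x hx, hp0 x hx⟩
  -- case τ ≠ 0
  · have hτ2 : (0:ℝ) < τ^2 := by positivity
    set C : ℝ := ((α₃₁ - γ^2*β)*ρ₁ - α₁*ρ₃)/(α₁*γ*μ) with hC
    -- p = C v₁ on Ioo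
    have hpC : ∀ x ∈ Set.Ioo (0:ℝ) L, p x = C * v₁ x := by
      intro x hx
      have e2 := heq₂ x (hIoo hx)
      have e3 := heq₃ x (hIoo hx)
      have h31x := h31 x (hIoo hx)
      have hddx := hdd31 x hx
      have ho1x := ho1 x (hIoo hx)
      have key : α₁*γ*μ*τ^2*h₃ * p x = ((α₃₁ - γ^2*β)*ρ₁ - α₁*ρ₃)*τ^2*h₃ * v₁ x := by
        linear_combination α₁ * e2 + α₁ * γ * e3 -
          (α₁ * (G₂/h₂) + α₁ * τ^2 * ρ₃ * h₃) * h31x -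
          α₁ * (α₃₁ - γ^2*β) * h₃ * hddx - (α₃₁ - γ^2*β) * h₃ * ho1x
      have hne : τ^2*h₃ ≠ 0 := by positivity
      have key2 : α₁*γ*μ * p x = ((α₃₁ - γ^2*β)*ρ₁ - α₁*ρ₃) * v₁ x := by
        apply mul_left_cancel₀ hne
        linear_combination key
      rw [hC]
      field_simp
      linear_combination key2
    have hpC' : ∀ x ∈ Set.Icc (0:ℝ) L, p x = C * v₁ x := by
      have := Set.EqOn.closure (fun x hx => hpC x hx) hpd.continuous
        (continuous_const.mul hv₁d.continuous)
      intro x hx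
      exact this (hclo ▸ hx)
    have hCv : C * v₁ L = 0 := by rw [← hpC' L ⟨hL.le, le_refl L⟩]; exact hpL
    rcases mul_eq_zero.mp hCv with hC0 | hv₁L
    -- C = 0 : p ≡ 0, then v₃'' = 0 from heq₃, hence v₁ = 0
    · have hp0 : ∀ x ∈ Set.Icc (0:ℝ) L, p x = 0 := by
        intro x hx; rw [hpC' x hx, hC0, zero_mul]
      have hdp0 : ∀ x ∈ Set.Ioo (0:ℝ) L, deriv p x = 0 := by
        intro x hx
        have := deriv_congr_Ioo (g := fun _ => (0:ℝ)) (fun y hy => hp0 y (hIoo hy)) hx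
        simpa using this
      have hP0 : ∀ x ∈ Set.Ioo (0:ℝ) L, deriv (deriv p) x = 0 := by
        intro x hx
        have := deriv_congr_Ioo (g := fun _ => (0:ℝ)) hdp0 hx
        simpa using this
      have hv₁0 : ∀ x ∈ Set.Ioo (0:ℝ) L, v₁ x = 0 := by
        intro x hx
        have e3 := heq₃ x (hIoo hx)
        rw [hP0 x hx, hdd31 x hx, hp0 x (hIoo hx)] at e3
        have hD : deriv (deriv v₁) x = 0 := by
          have : γ * β * h₃ * deriv (deriv v₁) x = 0 := by linarith [e3]
          exact (mul_eq_zero.mp this).resolve_left (by positivity)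
        have := ho1 x (hIoo hx)
        rw [hD, mul_zero] at this
        have h0 : τ^2 * ρ₁ * v₁ x = 0 := by linarith [this]
        have := (mul_eq_zero.mp h0).resolve_left (by positivity)
        exact this
      have hv₁0' : ∀ x ∈ Set.Icc (0:ℝ) L, v₁ x = 0 := by
        have := Set.EqOn.closure (g := fun _ => (0:ℝ)) (fun x hx => hv₁0 x hx)
          hv₁d.continuous continuous_const
        intro x hx; exact this (hclo ▸ hx)
      intro x hx
      exact ⟨hv₁0' x hx, by rw [h31 x hx]; exact hv₁0' x hx, hp0 x hx⟩
    -- v₁ L = 0 : energy argument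
    · set E : ℝ → ℝ := fun y => τ^2*ρ₁*(v₁ y)^2 + α₁*(deriv v₁ y)^2 with hE
      have hEd : Differentiable ℝ E := by
        apply Differentiable.add
        · exact (hv₁d.pow 2).const_mul _
        · exact (hv₁'d.pow 2).const_mul _
      have hEder : ∀ x ∈ Set.Ioo (0:ℝ) L, deriv E x = 0 := by
        intro x hx
        have h1 : HasDerivAt v₁ (deriv v₁ x) x := (hv₁d x).hasDerivAt
        have h2 : HasDerivAt (deriv v₁) (deriv (deriv v₁) x) x := (hv₁'d x).hasDerivAt
        have hE' : HasDerivAt E (τ^2*ρ₁*((2:ℕ) * v₁ x ^ 1 * deriv v₁ x)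
            + α₁*((2:ℕ) * deriv v₁ x ^ 1 * deriv (deriv v₁) x)) x :=
          ((h1.pow 2).const_mul _).add ((h2.pow 2).const_mul _)
        rw [hE'.deriv]
        have := ho1 x (hIoo hx)
        push_cast
        linear_combination 2 * deriv v₁ x * this
      have hcE := constOn hEd hEder
      have hEL : E L = 0 := by
        simp only [hE]
        rw [hv₁L, hd1]
        ring
      have hE0 : E 0 = 0 := by
        have := hcE L ⟨hL.le, le_refl L⟩
        rw [hEL] at this; linarith
      have hv₁0' : ∀ x ∈ Set.Icc (0:ℝ) L, v₁ x = 0 := by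
        intro x hx
        have hEx : E x = 0 := by rw [hcE x hx, hE0]
        simp only [hE] at hEx
        have h1 : τ^2*ρ₁*(v₁ x)^2 ≥ 0 := by positivity
        have h2 : α₁*(deriv v₁ x)^2 ≥ 0 := by positivity
        have hsq : τ^2*ρ₁*(v₁ x)^2 = 0 := by linarith
        have : (v₁ x)^2 = 0 := by
          rcases mul_eq_zero.mp hsq with h' | h'
          · exact absurd h' (by positivity)
          · exact h'
        exact pow_eq_zero_iff (by norm_num) |>.mp this
      intro x hx
      refine ⟨hv₁0' x hx, by rw [h31 x hx]; exact hv₁0' x hx, ?_⟩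
      rw [hpC' x hx, hv₁0' x hx, mul_zero]
end

section
/- Let Ã, βγh₂h₃ς, B̃ > 0. Suppose w ∈ C⁴([0,L]) and u ∈ C²([0,L]) satisfy Ã w_{xxxx} - βγh₂h₃ς B̃ u_x = 0, ςC̃ u - u_{xx} + B̃ w_{xxx} = 0 with ςC̃ > 0, and the boundary conditions w(0)=w_x(0)=u(0)=w_{xx}(L)=u_x(L)=0 and Ã w_{xxx}(L) - βγh₂h₃ς B̃ u(L) = 0. Then w ≡ 0 and u ≡ 0. -/
/-!
Since `Ã w'''' = k B̃ u'`, the quantity `Ã w''' - k B̃ u` is constant, hence zero by the boundary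
condition at `L`. Eliminating `w'''` leaves `u'' = (ςC̃ + k B̃² / Ã) u` with a positive coefficient,
whose only solution with `u(0) = u'(L) = 0` is zero (by energy conservation and uniqueness for the
initial value problem). Then `w''' = 0`, and `w'' = w' = w = 0` by the remaining boundary conditions.
-/

open Set

theorem ContDiff.differentiable_iterate_deriv {𝕜 F : Type*} [NontriviallyNormedField 𝕜]
    [NormedAddCommGroup F] [NormedSpace 𝕜 F] {f : 𝕜 → F} {n : WithTop ℕ∞}
    (h : ContDiff 𝕜 n f) {k : ℕ} (hk : k < n) : Differentiable 𝕜 (deriv^[k] f) :=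
  iteratedDeriv_eq_iterate (f := f) ▸ h.differentiable_iteratedDeriv k hk

section ConstantOfDerivEqZero

variable {E : Type*} [NormedAddCommGroup E] [NormedSpace ℝ E] {f : ℝ → E} {a b : ℝ}

theorem eq_left_of_deriv_eq_zero (hf : Differentiable ℝ f) (hf' : ∀ x ∈ Ico a b, deriv f x = 0) :
    ∀ x ∈ Icc a b, f x = f a :=
  constant_of_has_deriv_right_zero hf.continuous.continuousOn fun x hx =>
    hf' x hx ▸ (hf x).hasDerivAt.hasDerivWithinAt

theorem eq_right_of_deriv_eq_zero (hf : Differentiable ℝ f) (hf' : ∀ x ∈ Ico a b, deriv f x = 0) :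
    ∀ x ∈ Icc a b, f x = f b := fun x hx => by
  have hconst := eq_left_of_deriv_eq_zero hf hf'
  rw [hconst x hx, hconst b (right_mem_Icc.2 (hx.1.trans hx.2))]

end ConstantOfDerivEqZero

section SecondOrderLinear

variable {u : ℝ → ℝ} {a b c : ℝ}

/-- The energy `c u² - u'²` is conserved along `u'' = c u`; comparing its values at the two
endpoints forces `u'(a) = 0` when `c ≥ 0`. -/
theorem deriv_left_eq_zero_of_deriv_deriv_eq_mul (hc : 0 ≤ c) (hab : a ≤ b)
    (hu : Differentiable ℝ u) (hu' : Differentiable ℝ (deriv u))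
    (heq : ∀ x ∈ Ico a b, deriv (deriv u) x = c * u x) (ha : u a = 0) (hb : deriv u b = 0) :
    deriv u a = 0 := by
  set E : ℝ → ℝ := fun x => c * u x ^ 2 - deriv u x ^ 2
  have hE_deriv : ∀ x, HasDerivAt E (2 * deriv u x * (c * u x - deriv (deriv u) x)) x := fun x =>
    (((hu x).hasDerivAt.pow 2).const_mul c |>.sub ((hu' x).hasDerivAt.pow 2)).congr_deriv
      (by ring)
  have hE_const := eq_left_of_deriv_eq_zero (fun x => (hE_deriv x).differentiableAt)
    fun x hx => by rw [(hE_deriv x).deriv, heq x hx, sub_self, mul_zero]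
  have hEb : c * u b ^ 2 = -deriv u a ^ 2 := by
    simpa [E, ha, hb] using hE_const b (right_mem_Icc.2 hab)
  nlinarith [mul_nonneg hc (sq_nonneg (u b)), sq_nonneg (deriv u a)]

theorem eqOn_zero_of_deriv_deriv_eq_mul (hu : Differentiable ℝ u)
    (hu' : Differentiable ℝ (deriv u)) (heq : ∀ x ∈ Ico a b, deriv (deriv u) x = c * u x)
    (ha : u a = 0) (ha' : deriv u a = 0) : EqOn u 0 (Icc a b) := by
  let v : ℝ → ℝ × ℝ → ℝ × ℝ := fun _ p => (p.2, c • p.1)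
  have hv : ∀ t, LipschitzWith (max 1 (‖c‖₊ * 1)) (v t) := fun _ =>
    LipschitzWith.prodMk LipschitzWith.prod_snd ((lipschitzWith_smul c).comp LipschitzWith.prod_fst)
  have hsol := ODE_solution_unique (v := v) (f := fun t => (u t, deriv u t)) (g := fun _ => 0)
    (a := a) (b := b) hv
    (hu.continuous.prodMk hu'.continuous).continuousOn
    (fun t ht => by
      simpa [v, heq t ht] using ((hu t).hasDerivAt.prodMk (hu' t).hasDerivAt).hasDerivWithinAt)
    continuousOn_const
    (fun t _ => by
      convert (hasDerivAt_const t (0 : ℝ × ℝ)).hasDerivWithinAt using 1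
      simp [v])
    (by simp [ha, ha'])
  exact fun x hx => congrArg Prod.fst (hsol hx)

theorem eqOn_zero_of_deriv_deriv_eq_mul_of_nonneg (hc : 0 ≤ c) (hu : Differentiable ℝ u)
    (hu' : Differentiable ℝ (deriv u)) (heq : ∀ x ∈ Ico a b, deriv (deriv u) x = c * u x)
    (ha : u a = 0) (hb : deriv u b = 0) : EqOn u 0 (Icc a b) := fun _ hx =>
  eqOn_zero_of_deriv_deriv_eq_mul hu hu' heq ha
    (deriv_left_eq_zero_of_deriv_deriv_eq_mul hc (hx.1.trans hx.2) hu hu' heq ha hb) hx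

end SecondOrderLinear

theorem stmt_14_general (L Atil k Btil sC : ℝ)
    (hA : 0 < Atil) (hk : 0 < k) (hsC : 0 < sC)
    (w u : ℝ → ℝ) (hw : ContDiff ℝ 4 w) (hu : ContDiff ℝ 2 u)
    (heq₁ : ∀ x ∈ Set.Icc (0 : ℝ) L,
      Atil * deriv (deriv (deriv (deriv w))) x - k * Btil * deriv u x = 0)
    (heq₂ : ∀ x ∈ Set.Icc (0 : ℝ) L,
      sC * u x - deriv (deriv u) x + Btil * deriv (deriv (deriv w)) x = 0)
    (hbc : w 0 = 0 ∧ deriv w 0 = 0 ∧ u 0 = 0 ∧ deriv (deriv w) L = 0 ∧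
      deriv u L = 0)
    (hbcL : Atil * deriv (deriv (deriv w)) L - k * Btil * u L = 0) :
    ∀ x ∈ Set.Icc (0 : ℝ) L, w x = 0 ∧ u x = 0 := by
  obtain ⟨hw0, hw'0, hu0, hw''L, hu'L⟩ := hbc
  have dw₀ : Differentiable ℝ w := hw.differentiable_iterate_deriv (k := 0) (by norm_num)
  have dw₁ : Differentiable ℝ (deriv w) := hw.differentiable_iterate_deriv (k := 1) (by norm_num)
  have dw₂ : Differentiable ℝ (deriv (deriv w)) :=
    hw.differentiable_iterate_deriv (k := 2) (by norm_num)
  have dw₃ : Differentiable ℝ (deriv (deriv (deriv w))) :=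
    hw.differentiable_iterate_deriv (k := 3) (by norm_num)
  have du₀ : Differentiable ℝ u := hu.differentiable_iterate_deriv (k := 0) (by norm_num)
  have du₁ : Differentiable ℝ (deriv u) := hu.differentiable_iterate_deriv (k := 1) (by norm_num)
  have hcoupling : ∀ x ∈ Icc 0 L, Atil * deriv (deriv (deriv w)) x - k * Btil * u x = 0 :=
    fun x hx => (eq_right_of_deriv_eq_zero ((dw₃.const_mul _).sub (du₀.const_mul _))
      (fun y hy => by
        rw [((dw₃ y).hasDerivAt.const_mul _ |>.sub ((du₀ y).hasDerivAt.const_mul _)).deriv]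
        exact heq₁ y (Ico_subset_Icc_self hy)) x hx).trans hbcL
  have hu'' : ∀ x ∈ Ico 0 L, deriv (deriv u) x = (sC + k * Btil ^ 2 / Atil) * u x := by
    intro x hx
    have hx' := Ico_subset_Icc_self hx
    field_simp
    linear_combination (-Atil) * heq₂ x hx' + Btil * hcoupling x hx'
  have hu_zero := eqOn_zero_of_deriv_deriv_eq_mul_of_nonneg (by positivity) du₀ du₁ hu'' hu0 hu'L
  have hw''' : ∀ x ∈ Ico 0 L, deriv (deriv (deriv w)) x = 0 := fun x hx => by
    simpa [hu_zero (Ico_subset_Icc_self hx), hA.ne'] using hcoupling x (Ico_subset_Icc_self hx)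
  have hw'' : ∀ x ∈ Icc 0 L, deriv (deriv w) x = 0 := fun x hx =>
    (eq_right_of_deriv_eq_zero dw₂ hw''' x hx).trans hw''L
  have hw' : ∀ x ∈ Icc 0 L, deriv w x = 0 := fun x hx =>
    (eq_left_of_deriv_eq_zero dw₁ (fun y hy => hw'' y (Ico_subset_Icc_self hy)) x hx).trans hw'0
  have hw_zero : ∀ x ∈ Icc 0 L, w x = 0 := fun x hx =>
    (eq_left_of_deriv_eq_zero dw₀ (fun y hy => hw' y (Ico_subset_Icc_self hy)) x hx).trans hw0
  exact fun x hx => ⟨hw_zero x hx, hu_zero hx⟩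

/-- The kernel of the electrostatic Mead-Marcus generator is trivial: if
`Ã w'''' - k B̃ u' = 0` and `ς̃C u - u'' + B̃ w''' = 0` on `[0,L]` with
`Ã, k = βγh₂h₃ς, B̃, ςC̃ > 0`, boundary conditions
`w(0) = w'(0) = u(0) = w''(L) = u'(L) = 0` and `Ã w'''(L) - k B̃ u(L) = 0`,
then `w ≡ 0` and `u ≡ 0`. -/
theorem stmt_14 (L Atil k Btil sC : ℝ)
    (hL : 0 < L) (hA : 0 < Atil) (hk : 0 < k) (hB : 0 < Btil) (hsC : 0 < sC)
    (w u : ℝ → ℝ) (hw : ContDiff ℝ 4 w) (hu : ContDiff ℝ 2 u)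
    (heq₁ : ∀ x ∈ Set.Icc (0 : ℝ) L,
      Atil * deriv (deriv (deriv (deriv w))) x - k * Btil * deriv u x = 0)
    (heq₂ : ∀ x ∈ Set.Icc (0 : ℝ) L,
      sC * u x - deriv (deriv u) x + Btil * deriv (deriv (deriv w)) x = 0)
    (hbc : w 0 = 0 ∧ deriv w 0 = 0 ∧ u 0 = 0 ∧ deriv (deriv w) L = 0 ∧
      deriv u L = 0)
    (hbcL : Atil * deriv (deriv (deriv w)) L - k * Btil * u L = 0) :
    ∀ x ∈ Set.Icc (0 : ℝ) L, w x = 0 ∧ u x = 0 :=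
  stmt_14_general L Atil k Btil sC hA hk hsC w u hw hu heq₁ heq₂ hbc hbcL
end
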